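/- arXiv:2601.07498 — 4 statements merged into one kernel-verified Lean document; each statement's English description precedes it below -/
import Mathlib

section
/- Let A ∈ ℝ^{m×n} have no zero rows, let L₁ be the lower triangular part (including diagonal) of AAᵀ. Then Gᵀ = I − AᵀL₁⁻ᵀA satisfies Gᵀ·(Aᵀeₘ) = 0; i.e., the last row aₘ of A is a left eigenvector of G = I − AᵀL₁⁻¹A with eigenvalue 0. -/
open Matrix

/-! Since `A Aᵀ` is symmetric, its last column equals the last row of its lower triangular part
`L₁`, i.e. the last column of `L₁ᵀ`; hence `A Aᵀ eₘ = L₁ᵀ eₘ`. The diagonal of `L₁` consists of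
the squared row norms of `A`, so `L₁` is invertible, and then
`Aᵀ L₁⁻ᵀ A (Aᵀ eₘ) = Aᵀ L₁⁻ᵀ L₁ᵀ eₘ = Aᵀ eₘ`. -/

namespace Matrix

variable {ι m n R : Type*}

def lowerTriangularPart [LinearOrder ι] [Zero R] (M : Matrix ι ι R) : Matrix ι ι R :=
  of fun i j => if j ≤ i then M i j else 0

theorem isLowerTriangular_lowerTriangularPart [LinearOrder ι] [Zero R] (M : Matrix ι ι R) :
    M.lowerTriangularPart.IsLowerTriangular := fun i j hij => by
  simp [lowerTriangularPart, not_le_of_gt (OrderDual.toDual_lt_toDual.mp hij)]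

theorem det_lowerTriangularPart [LinearOrder ι] [Fintype ι] [CommRing R] (M : Matrix ι ι R) :
    M.lowerTriangularPart.det = ∏ i, M i i := by
  rw [det_of_isLowerTriangular _ (isLowerTriangular_lowerTriangularPart M)]
  simp [lowerTriangularPart]

theorem IsSymm.col_transpose_lowerTriangularPart_of_isTop [LinearOrder ι] [Zero R]
    {M : Matrix ι ι R} (hM : M.IsSymm) {e : ι} (he : IsTop e) :
    M.lowerTriangularPartᵀ.col e = M.col e := by
  ext i
  simp [lowerTriangularPart, he i, hM.apply]

theorem isSymm_mul_transpose [Fintype n] [CommSemiring R] (A : Matrix m n R) :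
    (A * Aᵀ).IsSymm := by
  simp [IsSymm, transpose_mul]

theorem mul_transpose_self_apply_self_pos [Fintype n] [Ring R] [LinearOrder R]
    [IsStrictOrderedRing R] (A : Matrix m n R) {i : m} (hi : A i ≠ 0) : 0 < (A * Aᵀ) i i := by
  rw [mul_apply_eq_vecMul]
  exact lt_of_le_of_ne (Finset.sum_nonneg fun j _ => mul_self_nonneg (A i j))
    (Ne.symm (dotProduct_self_eq_zero.not.mpr hi))

theorem isUnit_det_lowerTriangularPart_mul_transpose [LinearOrder m] [Fintype m] [Fintype n]
    [Field R] [LinearOrder R] [IsStrictOrderedRing R] (A : Matrix m n R) (hA : ∀ i, A i ≠ 0) :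
    IsUnit (A * Aᵀ).lowerTriangularPart.det := by
  rw [det_lowerTriangularPart]
  exact (Finset.prod_pos fun i _ => mul_transpose_self_apply_self_pos A (hA i)).ne'.isUnit

theorem one_sub_mul_inv_mul_mulVec_eq_zero [Fintype m] [Fintype n] [DecidableEq m]
    [DecidableEq n] [CommRing R] (B : Matrix n m R) (A : Matrix m n R) {K : Matrix m m R}
    (hK : IsUnit K.det) {v : m → R} (h : (A * B) *ᵥ v = K *ᵥ v) :
    (1 - B * K⁻¹ * A) *ᵥ (B *ᵥ v) = 0 := by
  rw [sub_mulVec, one_mulVec, mulVec_mulVec, Matrix.mul_assoc, Matrix.mul_assoc,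
    ← mulVec_mulVec, ← mulVec_mulVec, h, mulVec_mulVec _ K⁻¹, nonsing_inv_mul _ hK, one_mulVec,
    sub_self]

end Matrix

/-- If `A ∈ ℝ^{m×n}` has no zero rows and `L₁` is the lower triangular part
(including the diagonal) of `AAᵀ`, then `Gᵀ = I − AᵀL₁⁻ᵀA` satisfies
`Gᵀ (Aᵀ eₘ) = 0`, i.e. the last row `aₘ` of `A` is a left eigenvector of
`G = I − AᵀL₁⁻¹A` with eigenvalue `0`. -/
theorem stmt_2 (m n : ℕ) (hm : 0 < m) (A : Matrix (Fin m) (Fin n) ℝ)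
    (hrows : ∀ i : Fin m, A i ≠ 0)
    (L₁ : Matrix (Fin m) (Fin m) ℝ)
    (hL₁ : L₁ = Matrix.of fun i j => if j ≤ i then (A * Aᵀ) i j else 0)
    (Gt : Matrix (Fin n) (Fin n) ℝ)
    (hGt : Gt = 1 - Aᵀ * (L₁ᵀ)⁻¹ * A) :
    Gt.mulVec (Aᵀ.mulVec (Pi.single (⟨m - 1, Nat.sub_lt hm one_pos⟩ : Fin m) 1)) = 0 := by
  have hL : L₁ = (A * Aᵀ).lowerTriangularPart := hL₁
  have htop : IsTop (⟨m - 1, Nat.sub_lt hm one_pos⟩ : Fin m) := fun i =>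
    Fin.le_def.mpr (Nat.le_sub_one_of_lt i.2)
  subst hL hGt
  refine one_sub_mul_inv_mul_mulVec_eq_zero _ _ ?_ ?_
  · rw [det_transpose]
    exact isUnit_det_lowerTriangularPart_mul_transpose A hrows
  · rw [mulVec_single_one, mulVec_single_one,
      (isSymm_mul_transpose A).col_transpose_lowerTriangularPart_of_isTop htop]
end

section
/- Let A ∈ ℝ^{m×n} have no zero rows, let L₁ be the lower triangular part (including diagonal) of AAᵀ, and suppose that for some index j with 2 ≤ j ≤ m the row aⱼ is orthogonal to all earlier rows a₁,…,a_{j−1}. Then AAᵀeⱼ = L₁eⱼ, and consequently Aᵀeⱼ = aⱼ is an eigenvector of G = I − AᵀL₁⁻¹A with eigenvalue 0. -/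
open Matrix

/-!
Entry `(i, j)` of the Gram matrix `AAᵀ` is `aᵢ ⬝ᵥ aⱼ`. Orthogonality of `aⱼ` to the earlier rows
kills the part of column `j` above the diagonal, so that column agrees with column `j` of its lower
triangular part `L₁`. The diagonal of `L₁` is `‖aᵢ‖² ≠ 0`, so `L₁` is invertible, and
`AᵀL₁⁻¹A aⱼ = AᵀL₁⁻¹(AAᵀeⱼ) = AᵀL₁⁻¹L₁eⱼ = aⱼ`.
-/

namespace Matrix

variable {ι m n R : Type*}

def lowerPart [LinearOrder ι] [Zero R] (M : Matrix ι ι R) : Matrix ι ι R :=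
  of fun i j => if j ≤ i then M i j else 0

section LowerPart

variable [LinearOrder ι] (M : Matrix ι ι R)

theorem lowerPart_isLowerTriangular [Zero R] : M.lowerPart.IsLowerTriangular := by
  intro i j hij
  simp [lowerPart, not_le.mpr (OrderDual.toDual_lt_toDual.mp hij)]

@[simp]
theorem lowerPart_apply_self [Zero R] (i : ι) : M.lowerPart i i = M i i := by
  simp [lowerPart]

theorem isUnit_det_lowerPart [Fintype ι] [Field R] (hdiag : ∀ i, M i i ≠ 0) :
    IsUnit M.lowerPart.det := by
  rw [isUnit_iff_ne_zero, det_of_isLowerTriangular _ M.lowerPart_isLowerTriangular]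
  exact Finset.prod_ne_zero_iff.mpr fun i _ => by simpa using hdiag i

theorem lowerPart_mulVec_single [Fintype ι] [DecidableEq ι] [NonUnitalNonAssocSemiring R]
    {j : ι} (habove : ∀ i < j, M i j = 0) (x : R) :
    M.lowerPart *ᵥ Pi.single j x = M *ᵥ Pi.single j x := by
  ext i
  rcases le_or_gt j i with hji | hij
  · simp [lowerPart, hji]
  · simp [lowerPart, not_le.mpr hij, habove i hij]

end LowerPart

theorem mul_transpose_apply [Fintype n] [Mul R] [AddCommMonoid R] (A : Matrix m n R) (i j : m) :
    (A * Aᵀ) i j = A i ⬝ᵥ A j :=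
  rfl

theorem mul_transpose_apply_self_ne_zero [Fintype n] [Ring R] [LinearOrder R]
    [IsStrictOrderedRing R] {A : Matrix m n R} {i : m} (hi : A i ≠ 0) : (A * Aᵀ) i i ≠ 0 := by
  rw [mul_transpose_apply]
  exact fun h => hi (dotProduct_self_eq_zero.mp h)

theorem one_sub_transpose_mul_inv_mul_mulVec_transpose_mulVec [Fintype m] [DecidableEq m]
    [Fintype n] [DecidableEq n] [CommRing R] {A : Matrix m n R} {L : Matrix m m R}
    (hL : IsUnit L.det) {v : m → R} (hv : (A * Aᵀ) *ᵥ v = L *ᵥ v) :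
    (1 - Aᵀ * L⁻¹ * A) *ᵥ (Aᵀ *ᵥ v) = 0 := by
  have hcancel : (Aᵀ * L⁻¹ * A) *ᵥ (Aᵀ *ᵥ v) = Aᵀ *ᵥ v := calc
    (Aᵀ * L⁻¹ * A) *ᵥ (Aᵀ *ᵥ v) = (Aᵀ * L⁻¹) *ᵥ ((A * Aᵀ) *ᵥ v) := by
      simp only [mulVec_mulVec, Matrix.mul_assoc]
    _ = (Aᵀ * (L⁻¹ * L)) *ᵥ v := by simp only [hv, mulVec_mulVec, Matrix.mul_assoc]
    _ = Aᵀ *ᵥ v := by rw [nonsing_inv_mul L hL, Matrix.mul_one]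
  rw [sub_mulVec, one_mulVec, hcancel, sub_self]

end Matrix

theorem stmt_3_general (m n : ℕ) (A : Matrix (Fin m) (Fin n) ℝ)
    (hrows : ∀ i : Fin m, A i ≠ 0)
    (L₁ : Matrix (Fin m) (Fin m) ℝ)
    (hL₁ : L₁ = Matrix.of fun i j => if j ≤ i then (A * Aᵀ) i j else 0)
    (j : Fin m)
    (horth : ∀ i : Fin m, i < j → A i ⬝ᵥ A j = 0) :
    (A * Aᵀ).mulVec (Pi.single j 1) = L₁.mulVec (Pi.single j 1) ∧
    (1 - Aᵀ * L₁⁻¹ * A).mulVec (Aᵀ.mulVec (Pi.single j 1)) = 0 := by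
  obtain rfl : L₁ = (A * Aᵀ).lowerPart := hL₁
  have hcol : (A * Aᵀ) *ᵥ Pi.single j 1 = (A * Aᵀ).lowerPart *ᵥ Pi.single j 1 :=
    ((A * Aᵀ).lowerPart_mulVec_single horth 1).symm
  have hdet : IsUnit (A * Aᵀ).lowerPart.det :=
    (A * Aᵀ).isUnit_det_lowerPart fun i => mul_transpose_apply_self_ne_zero (hrows i)
  exact ⟨hcol, one_sub_transpose_mul_inv_mul_mulVec_transpose_mulVec hdet hcol⟩

/-- If `A ∈ ℝ^{m×n}` has no zero rows, `L₁` is the lower triangular part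
(including the diagonal) of `AAᵀ`, and row `aⱼ` (with `2 ≤ j` in 1-based
indexing) is orthogonal to all earlier rows, then `AAᵀeⱼ = L₁eⱼ` and
`aⱼ = Aᵀeⱼ` is an eigenvector of `G = I − AᵀL₁⁻¹A` with eigenvalue `0`. -/
theorem stmt_3 (m n : ℕ) (A : Matrix (Fin m) (Fin n) ℝ)
    (hrows : ∀ i : Fin m, A i ≠ 0)
    (L₁ : Matrix (Fin m) (Fin m) ℝ)
    (hL₁ : L₁ = Matrix.of fun i j => if j ≤ i then (A * Aᵀ) i j else 0)
    (j : Fin m) (hj : 1 ≤ (j : ℕ))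
    (horth : ∀ i : Fin m, i < j → A i ⬝ᵥ A j = 0) :
    (A * Aᵀ).mulVec (Pi.single j 1) = L₁.mulVec (Pi.single j 1) ∧
    (1 - Aᵀ * L₁⁻¹ * A).mulVec (Aᵀ.mulVec (Pi.single j 1)) = 0 :=
  stmt_3_general m n A hrows L₁ hL₁ j horth
end

section
/- Let A ∈ ℝ^{m×n}, let AAᵀ = L̂ + D + L̂ᵀ with D diagonal and L̂ strictly lower triangular, let 0 < ω < 2 and L = L̂ + ω⁻¹D with L invertible. Then (I − AᵀL⁻ᵀA)(I − AᵀL⁻¹A) = I − (2ω⁻¹ − 1)·AᵀL⁻ᵀDL⁻¹A. -/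
/-!
With `G = I − AᵀL⁻¹A`, expanding `GᵀG` leaves the cross term `AᵀL⁻ᵀ(AAᵀ)L⁻¹A`. Writing
`AAᵀ = L + Lᵀ − (2ω⁻¹ − 1)D`, the pieces `L` and `Lᵀ` cancel against the inverses on either side
and exactly absorb the two linear terms, leaving only the `D` part.
-/

open Matrix

theorem Matrix.one_sub_mul_one_sub_eq_of_mul_eq_one {k l R : Type*} [Fintype k] [Fintype l]
    [DecidableEq k] [DecidableEq l] [Ring R] {A : Matrix k l R} {B : Matrix l k R}
    {L L' M M' : Matrix k k R} (hM : L * M = 1) (hM' : M' * L' = 1) :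
    (1 - B * M' * A) * (1 - B * M * A) = 1 - B * M' * (L + L' - A * B) * M * A := by
  have hcancel : B * M' * L * M * A = B * M' * A := by
    rw [Matrix.mul_assoc (B * M'), hM, Matrix.mul_one]
  have hcancel' : B * M' * L' * M * A = B * M * A := by
    rw [Matrix.mul_assoc B, hM', Matrix.mul_one]
  have hAB : B * M' * (A * B) * M * A = B * M' * A * (B * M * A) := by
    simp only [Matrix.mul_assoc]
  have hcross : B * M' * (L + L' - A * B) * M * A =
      B * M' * A + B * M * A - B * M' * A * (B * M * A) := by
    rw [Matrix.mul_sub, Matrix.mul_add, Matrix.sub_mul, Matrix.add_mul, Matrix.sub_mul,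
      Matrix.add_mul, hcancel, hcancel', hAB]
  rw [hcross]
  noncomm_ring

theorem Matrix.add_transpose_sub_eq_smul_of_eq_add_diag {ι R : Type*} [CommRing R]
    {S D Lhat L : Matrix ι ι R} {c : R} (hD : D.IsDiag) (hS : S = Lhat + D + Lhatᵀ)
    (hL : L = Lhat + c • D) : L + Lᵀ - S = (2 * c - 1) • D := by
  rw [hS, hL, transpose_add, transpose_smul, hD.isSymm.eq]
  module

theorem stmt_4_general (m n : ℕ) (A : Matrix (Fin m) (Fin n) ℝ)
    (D Lhat : Matrix (Fin m) (Fin m) ℝ)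
    (hD : D.IsDiag)
    (hdecomp : A * Aᵀ = Lhat + D + Lhatᵀ)
    (ω : ℝ)
    (L : Matrix (Fin m) (Fin m) ℝ) (hL : L = Lhat + ω⁻¹ • D)
    (hLinv : IsUnit L.det) :
    (1 - Aᵀ * (L⁻¹)ᵀ * A) * (1 - Aᵀ * L⁻¹ * A) =
      1 - (2 * ω⁻¹ - 1) • (Aᵀ * (L⁻¹)ᵀ * D * L⁻¹ * A) := by
  have hright : L * L⁻¹ = 1 := mul_nonsing_inv L hLinv
  have hleft : (L⁻¹)ᵀ * Lᵀ = 1 := by rw [← transpose_mul, hright, transpose_one]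
  rw [one_sub_mul_one_sub_eq_of_mul_eq_one hright hleft,
    add_transpose_sub_eq_smul_of_eq_add_diag hD hdecomp hL]
  simp only [Matrix.mul_smul, Matrix.smul_mul]

/-- Let `AAᵀ = L̂ + D + L̂ᵀ` with `D` diagonal and `L̂` strictly lower
triangular, let `0 < ω < 2` and `L = L̂ + ω⁻¹D` be invertible. Then
`(I − AᵀL⁻ᵀA)(I − AᵀL⁻¹A) = I − (2ω⁻¹ − 1)·AᵀL⁻ᵀDL⁻¹A`. -/
theorem stmt_4 (m n : ℕ) (A : Matrix (Fin m) (Fin n) ℝ)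
    (D Lhat : Matrix (Fin m) (Fin m) ℝ)
    (hD : D.IsDiag)
    (hLhat : ∀ i j : Fin m, i ≤ j → Lhat i j = 0)
    (hdecomp : A * Aᵀ = Lhat + D + Lhatᵀ)
    (ω : ℝ) (hω₀ : 0 < ω) (hω₂ : ω < 2)
    (L : Matrix (Fin m) (Fin m) ℝ) (hL : L = Lhat + ω⁻¹ • D)
    (hLinv : IsUnit L.det) :
    (1 - Aᵀ * (L⁻¹)ᵀ * A) * (1 - Aᵀ * L⁻¹ * A) =
      1 - (2 * ω⁻¹ - 1) • (Aᵀ * (L⁻¹)ᵀ * D * L⁻¹ * A) :=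
  stmt_4_general m n A D Lhat hD hdecomp ω L hL hLinv
end

section
/- Let G ∈ ℝ^{n×n} and suppose λ > 0 is a real eigenvalue of G = I − AᵀL⁻¹A with unit eigenvector x, where A ∈ ℝ^{m×n}, L ∈ ℝ^{m×m} invertible with L + Lᵀ positive definite, and ‖Ax‖ ≥ σ_min > 0. Then λ ≤ 1 − ν(L⁻¹)·σ_min², where ν(L⁻¹) is the smallest eigenvalue of the symmetric part of L⁻¹. -/
open Matrix

/-!
Writing `y = A x`, the unit eigenvector gives `λ = xᵀ G x = 1 − yᵀ L⁻¹ y`, and the quadratic form of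
`L⁻¹` is that of its symmetric part `H`, which is bounded below by `λ_min(H) ‖y‖²`. Since
`L⁻¹ + L⁻ᵀ = L⁻¹ (L + Lᵀ) L⁻ᵀ` is positive semidefinite, `λ_min(H) ≥ 0`, so `‖y‖² ≥ σ_min²` may be
substituted.
-/

open scoped MatrixOrder

namespace Matrix

variable {ι : Type*} [Fintype ι]

theorem dotProduct_mulVec_eq_of_mulVec_eq_smul {R : Type*} [CommSemiring R] {M : Matrix ι ι R}
    {x : ι → R} {c : R} (heig : M *ᵥ x = c • x) (hx : x ⬝ᵥ x = 1) : x ⬝ᵥ (M *ᵥ x) = c := by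
  rw [heig, dotProduct_smul, hx, smul_eq_mul, mul_one]

theorem dotProduct_transpose_mul_mul_mulVec {κ R : Type*} [Fintype κ] [CommSemiring R]
    (A : Matrix κ ι R) (B : Matrix κ κ R) (x : ι → R) :
    x ⬝ᵥ ((Aᵀ * B * A) *ᵥ x) = (A *ᵥ x) ⬝ᵥ (B *ᵥ (A *ᵥ x)) := by
  rw [← mulVec_mulVec, ← mulVec_mulVec, dotProduct_mulVec, vecMul_transpose]

theorem dotProduct_half_smul_add_transpose_mulVec {K : Type*} [Field K] [CharZero K]
    (M : Matrix ι ι K) (x : ι → K) :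
    x ⬝ᵥ ((((1 : K) / 2) • (M + Mᵀ)) *ᵥ x) = x ⬝ᵥ (M *ᵥ x) := by
  rw [smul_mulVec, dotProduct_smul, add_mulVec, dotProduct_add, dotProduct_transpose_mulVec,
    smul_eq_mul]
  ring

variable [DecidableEq ι]

theorem IsHermitian.iInf_eigenvalues_smul_one_le {M : Matrix ι ι ℝ} (hM : M.IsHermitian) :
    (⨅ i, hM.eigenvalues i) • (1 : Matrix ι ι ℝ) ≤ M := by
  rw [← Algebra.algebraMap_eq_smul_one, algebraMap_le_iff_le_spectrum (a := M) hM,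
    hM.spectrum_real_eq_range_eigenvalues]
  rintro _ ⟨i, rfl⟩
  exact ciInf_le (Set.finite_range _).bddBelow i

theorem IsHermitian.iInf_eigenvalues_mul_dotProduct_self_le {M : Matrix ι ι ℝ}
    (hM : M.IsHermitian) (y : ι → ℝ) :
    (⨅ i, hM.eigenvalues i) * (y ⬝ᵥ y) ≤ y ⬝ᵥ (M *ᵥ y) := by
  have h := (le_iff.mp hM.iInf_eigenvalues_smul_one_le).dotProduct_mulVec_nonneg y
  rw [star_trivial, sub_mulVec, dotProduct_sub, smul_mulVec, one_mulVec, dotProduct_smul,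
    smul_eq_mul] at h
  linarith

theorem inv_add_transpose_inv_eq {R : Type*} [CommRing R] (L : Matrix ι ι R) :
    L⁻¹ + L⁻¹ᵀ = L⁻¹ * (L + Lᵀ) * L⁻¹ᵀ := by
  by_cases hL : IsUnit L.det
  · rw [mul_add, add_mul, nonsing_inv_mul _ hL, one_mul, mul_assoc, ← transpose_mul,
      nonsing_inv_mul _ hL, transpose_one, mul_one, add_comm]
  · simp [nonsing_inv_apply_not_isUnit _ hL]

theorem PosSemidef.inv_add_transpose_inv {L : Matrix ι ι ℝ} (hL : (L + Lᵀ).PosSemidef) :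
    (L⁻¹ + L⁻¹ᵀ).PosSemidef := by
  rw [inv_add_transpose_inv_eq]
  simpa using hL.mul_mul_conjTranspose_same L⁻¹

end Matrix

theorem stmt_8_general (m n : ℕ) (A : Matrix (Fin m) (Fin n) ℝ)
    (L : Matrix (Fin m) (Fin m) ℝ)
    (hpd : (L + Lᵀ).PosDef)
    (hH : (((1 : ℝ) / 2) • (L⁻¹ + (L⁻¹)ᵀ)).IsHermitian)
    (x : Fin n → ℝ) (hx : x ⬝ᵥ x = 1)
    (σmin : ℝ)
    (hAx : σmin ^ 2 ≤ A.mulVec x ⬝ᵥ A.mulVec x)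
    (lam : ℝ)
    (heig : (1 - Aᵀ * L⁻¹ * A).mulVec x = lam • x) :
    lam ≤ 1 - (⨅ i : Fin m, hH.eigenvalues i) * σmin ^ 2 := by
  set ν := ⨅ i : Fin m, hH.eigenvalues i
  have hν : 0 ≤ ν := Real.iInf_nonneg fun i =>
    (hpd.posSemidef.inv_add_transpose_inv.smul (by norm_num : (0 : ℝ) ≤ 1 / 2)).eigenvalues_nonneg i
  have hlam : lam = 1 - (A *ᵥ x) ⬝ᵥ (L⁻¹ *ᵥ (A *ᵥ x)) := by
    rw [← dotProduct_mulVec_eq_of_mulVec_eq_smul heig hx, sub_mulVec, one_mulVec, dotProduct_sub,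
      hx, dotProduct_transpose_mul_mul_mulVec]
  calc lam = 1 - (A *ᵥ x) ⬝ᵥ ((((1 : ℝ) / 2) • (L⁻¹ + L⁻¹ᵀ)) *ᵥ (A *ᵥ x)) := by
        rw [hlam, dotProduct_half_smul_add_transpose_mulVec]
    _ ≤ 1 - ν * ((A *ᵥ x) ⬝ᵥ (A *ᵥ x)) := by
        gcongr
        exact hH.iInf_eigenvalues_mul_dotProduct_self_le _
    _ ≤ 1 - ν * σmin ^ 2 := by gcongr

/-- If `λ > 0` is a real eigenvalue of `G = I − AᵀL⁻¹A` with unit eigenvector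
`x`, `L` invertible with `L + Lᵀ` positive definite, and `‖Ax‖ ≥ σ_min > 0`,
then `λ ≤ 1 − ν(L⁻¹)·σ_min²`, where `ν(L⁻¹)` is the smallest eigenvalue of
the symmetric part of `L⁻¹`. -/
theorem stmt_8 (m n : ℕ) (A : Matrix (Fin m) (Fin n) ℝ)
    (L : Matrix (Fin m) (Fin m) ℝ)
    (hL : IsUnit L.det) (hpd : (L + Lᵀ).PosDef)
    (hH : (((1 : ℝ) / 2) • (L⁻¹ + (L⁻¹)ᵀ)).IsHermitian)
    (x : Fin n → ℝ) (hx : x ⬝ᵥ x = 1)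
    (σmin : ℝ) (hσ : 0 < σmin)
    (hAx : σmin ^ 2 ≤ A.mulVec x ⬝ᵥ A.mulVec x)
    (lam : ℝ) (hlam : 0 < lam)
    (heig : (1 - Aᵀ * L⁻¹ * A).mulVec x = lam • x) :
    lam ≤ 1 - (⨅ i : Fin m, hH.eigenvalues i) * σmin ^ 2 :=
  stmt_8_general m n A L hpd hH x hx σmin hAx lam heig
end
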